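/- Let l be an odd positive integer, r any positive integer, and s ∈ {−1, 1}. Then ∫_{−1}^{1} cos(π l θ)·max(s·sin(π r θ), 0) dθ = 0. -/

import Mathlib

/-!
Write `max x 0 = (x + |x|) / 2`. The part `cos (π l θ) · sin (π r θ)` is odd in `θ`, so it
integrates to zero over `[-1, 1]`. The part `cos (π l θ) · |sin (π r θ)|` is antiperiodic with
antiperiod `1`, since `|sin (π r θ)|` is `1`-periodic while `cos (π l θ)` changes sign under
`θ ↦ θ + 1` for odd `l`; so its integrals over `[-1, 0]` and `[0, 1]` cancel.
-/

open Real Function intervalIntegral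

theorem Function.Odd.intervalIntegral_neg_eq_zero {E : Type*} [NormedAddCommGroup E]
    [NormedSpace ℝ E] {f : ℝ → E} (hf : f.Odd) (a : ℝ) : ∫ x in -a..a, f x = 0 := by
  have h : ∫ x in -a..a, f x = -∫ x in -a..a, f x := by
    calc ∫ x in -a..a, f x = ∫ x in -a..a, f (-x) := by rw [integral_comp_neg, neg_neg]
      _ = -∫ x in -a..a, f x := by simp only [hf.eq, integral_neg]
  have h2 : (2 : ℝ) • ∫ x in -a..a, f x = 0 := by
    rw [two_smul]
    nth_rewrite 2 [h]
    exact add_neg_cancel _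
  exact (smul_eq_zero.mp h2).resolve_left two_ne_zero

theorem Function.Antiperiodic.intervalIntegral_add_two_mul_eq_zero {E : Type*}
    [NormedAddCommGroup E] [NormedSpace ℝ E] {f : ℝ → E} {c : ℝ} (hf : Antiperiodic f c)
    {a : ℝ} (hint : IntervalIntegrable f MeasureTheory.volume a (a + c)) :
    ∫ x in a..a + 2 * c, f x = 0 := by
  have hshift : ∫ x in a + c..a + c + c, f x = -∫ x in a..a + c, f x := by
    rw [← integral_comp_add_right, ← integral_neg]
    exact integral_congr fun x _ ↦ hf x
  have hint' : IntervalIntegrable f MeasureTheory.volume (a + c) (a + c + c) := by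
    simpa [hf.sub_eq, Pi.neg_def] using (hint.comp_sub_right c).neg
  rw [two_mul, ← add_assoc, ← integral_add_adjacent_intervals hint hint', hshift, add_neg_cancel]

theorem Function.Antiperiodic.mul_periodic {α β : Type*} [Add α] [Mul β] [HasDistribNeg β]
    {f g : α → β} {c : α} (hf : Antiperiodic f c) (hg : Periodic g c) :
    Antiperiodic (f * g) c := by
  simp_all

theorem Real.antiperiodic_cos_pi_mul_of_odd {l : ℕ} (hl : Odd l) :
    Antiperiodic (fun θ ↦ cos (π * l * θ)) 1 := fun θ ↦ by
  dsimp only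
  rw [mul_add, mul_one, mul_comm π l, cos_add_nat_mul_pi, hl.neg_one_pow, neg_one_mul]

theorem Real.periodic_abs_sin_pi_mul (r : ℕ) :
    Periodic (fun θ ↦ |sin (π * r * θ)|) 1 := fun θ ↦ by
  dsimp only
  rw [mul_add, mul_one, mul_comm π r, sin_add_nat_mul_pi, abs_mul, abs_pow, abs_neg, abs_one,
    one_pow, one_mul]

theorem max_zero_eq_half_add_abs (x : ℝ) : max x 0 = (x + |x|) / 2 := by
  rcases le_total 0 x with hx | hx
  · rw [max_eq_left hx, abs_of_nonneg hx]; ring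
  · rw [max_eq_right hx, abs_of_nonpos hx]; ring

theorem cos_relu_sin_integral_general
    (l r : ℕ) (hl : Odd l)
    (s : ℝ) :
    (∫ θ in (-1 : ℝ)..1, Real.cos (π * l * θ) * max (s * Real.sin (π * r * θ)) 0) = 0 := by
  have hodd : Function.Odd fun θ : ℝ ↦ cos (π * l * θ) * sin (π * r * θ) := fun θ ↦ by
    simp only [mul_neg, cos_neg, sin_neg]
  have hanti : Antiperiodic (fun θ ↦ cos (π * l * θ) * |sin (π * r * θ)|) 1 :=
    (antiperiodic_cos_pi_mul_of_odd hl).mul_periodic (periodic_abs_sin_pi_mul r)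
  have hsplit : ∀ θ : ℝ, cos (π * l * θ) * max (s * sin (π * r * θ)) 0 =
      s / 2 * (cos (π * l * θ) * sin (π * r * θ)) +
        |s| / 2 * (cos (π * l * θ) * |sin (π * r * θ)|) := fun θ ↦ by
    rw [max_zero_eq_half_add_abs, abs_mul]; ring
  have hcancel : ∫ θ in (-1 : ℝ)..1, cos (π * l * θ) * |sin (π * r * θ)| = 0 := by
    have h := hanti.intervalIntegral_add_two_mul_eq_zero
      (Continuous.intervalIntegrable (by fun_prop) (-1) (-1 + 1))
    rwa [show (-1 : ℝ) + 2 * 1 = 1 by norm_num] at h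
  simp only [hsplit]
  rw [integral_add (Continuous.intervalIntegrable (by fun_prop) _ _)
    (Continuous.intervalIntegrable (by fun_prop) _ _), integral_const_mul, integral_const_mul,
    hodd.intervalIntegral_neg_eq_zero, hcancel, mul_zero, mul_zero, add_zero]

/-- Cross-term vanishing: for odd `l`, any positive `r`, and `s ∈ {−1,1}`,
`∫_{−1}^{1} cos(π l θ) · max(s·sin(π r θ), 0) dθ = 0`. -/
theorem cos_relu_sin_integral
    (l r : ℕ) (hl : Odd l) (hl0 : 0 < l) (hr0 : 0 < r)
    (s : ℝ) (hs : s = 1 ∨ s = -1) :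
    (∫ θ in (-1 : ℝ)..1, Real.cos (π * l * θ) * max (s * Real.sin (π * r * θ)) 0) = 0 :=
  cos_relu_sin_integral_general l r hl s
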